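/- arXiv:2505.03298 — 3 statements merged into one kernel-verified Lean document; each statement's English description precedes it below -/
import Mathlib

section
/- The exact log-kernel on ℝ is sharply-σ^b(1/2)-regular. For every integer b ≥ 2 there exists a sequence (K_j)_{j≥0} of continuous nonnegative positive definite functions K_j : ℝ → ℝ such that: K_j(t) = 0 whenever |t| > b^{−j}; K_j(0) = log b for every j ≥ 1; sup_{j≥0} sup_{0<|t|≤b^{−j}} |K_j(t) − K_j(0)| / (b^{j}|t|) < ∞; and ∑_{j=0}^∞ K_j(t) = max{log(1/|t|), 0} for every real t ≠ 0. -/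
/-!
Each `K_j` is a mixture, over `u ∈ (b^{-(j+1)}, b^{-j}]` against `ν(du) = du/u² + δ₁`, of the
tents `(u - |t|)₊`. A tent is positive definite, being the autocorrelation
`∫ 1_{(x, x+u]} 1_{(y, y+u]}` of an indicator, and it is `1`-Lipschitz in `t`, so `K_j` is
positive definite, vanishes for `|t| ≥ b^{-j}` and is Lipschitz with constant
`≲ b^{-j} · b^{2(j+1)}`. The blocks tile `(0, 1]`, so
`∑ K_j(t) = (1 - |t|)₊ + ∫_{|t|}^1 (u - |t|)/u² du = log(1/|t|)` for `0 < |t| ≤ 1`.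
-/

noncomputable section

/-- A function `F` on an additive group is positive definite if for all finite families of
points `t_i` and complex coefficients `c_i`, the real part of
`∑_{i,l} c_i conj(c_l) F(t_i − t_l)` is nonnegative. -/
def IsPosDefFn {E : Type*} [AddGroup E] (F : E → ℝ) : Prop :=
  ∀ (k : ℕ) (t : Fin k → E) (c : Fin k → ℂ),
    0 ≤ (∑ i, ∑ l, c i * (starRingEnd ℂ) (c l) * ((F (t i - t l) : ℝ) : ℂ)).re

open MeasureTheory Set

lemma isPosDefFn_of_sum_mul_nonneg {E : Type*} [AddGroup E] {F : E → ℝ}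
    (hF : ∀ (k : ℕ) (t : Fin k → E) (a : Fin k → ℝ), 0 ≤ ∑ i, ∑ l, a i * a l * F (t i - t l)) :
    IsPosDefFn F := by
  intro k t c
  have hre : (∑ i, ∑ l, c i * (starRingEnd ℂ) (c l) * ((F (t i - t l) : ℝ) : ℂ)).re
      = ∑ i, ∑ l, (c i).re * (c l).re * F (t i - t l)
        + ∑ i, ∑ l, (c i).im * (c l).im * F (t i - t l) := by
    simp only [Complex.re_sum, ← Finset.sum_add_distrib, Complex.mul_re, Complex.conj_re,
      Complex.conj_im, Complex.ofReal_re, Complex.ofReal_im]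
    refine Finset.sum_congr rfl fun i _ => Finset.sum_congr rfl fun l _ => ?_
    ring
  rw [hre]
  exact add_nonneg (hF k t _) (hF k t _)

lemma isPosDefFn_add {E : Type*} [AddGroup E] {F G : E → ℝ} (hF : IsPosDefFn F)
    (hG : IsPosDefFn G) : IsPosDefFn fun x => F x + G x := by
  intro k t c
  have hsplit : (∑ i, ∑ l, c i * (starRingEnd ℂ) (c l) * ((F (t i - t l) + G (t i - t l) : ℝ) : ℂ))
      = ∑ i, ∑ l, c i * (starRingEnd ℂ) (c l) * ((F (t i - t l) : ℝ) : ℂ)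
        + ∑ i, ∑ l, c i * (starRingEnd ℂ) (c l) * ((G (t i - t l) : ℝ) : ℂ) := by
    simp only [Complex.ofReal_add, mul_add, Finset.sum_add_distrib]
  rw [hsplit, Complex.add_re]
  exact add_nonneg (hF k t c) (hG k t c)

lemma sum_mul_integral_mul_nonneg {α ι : Type*} [MeasurableSpace α] [Fintype ι] (μ : Measure α)
    (f : ι → α → ℝ) (hf : ∀ i l, Integrable (fun x => f i x * f l x) μ) (a : ι → ℝ) :
    0 ≤ ∑ i, ∑ l, a i * a l * ∫ x, f i x * f l x ∂μ := by
  have hint : ∀ i l, Integrable (fun x => a i * a l * (f i x * f l x)) μ :=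
    fun i l => (hf i l).const_mul _
  calc 0 ≤ ∫ x, (∑ i, a i * f i x) ^ 2 ∂μ := integral_nonneg fun x => sq_nonneg _
    _ = ∫ x, ∑ i, ∑ l, a i * a l * (f i x * f l x) ∂μ := by
        congr 1; funext x
        rw [sq, Finset.sum_mul_sum]
        exact Finset.sum_congr rfl fun i _ => Finset.sum_congr rfl fun l _ => by ring
    _ = ∑ i, ∑ l, a i * a l * ∫ x, f i x * f l x ∂μ := by
        rw [integral_finsetSum _ fun i _ => integrable_finsetSum _ fun l _ => hint i l]
        refine Finset.sum_congr rfl fun i _ => ?_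
        rw [integral_finsetSum _ fun l _ => hint i l]
        exact Finset.sum_congr rfl fun l _ => integral_const_mul _ _

def tent (u t : ℝ) : ℝ := max (u - |t|) 0

lemma tent_sub_eq_integral_indicator_mul (u x y : ℝ) :
    tent u (x - y) = ∫ z, (Ioc x (x + u)).indicator 1 z * (Ioc y (y + u)).indicator 1 z := by
  simp_rw [← inter_indicator_mul, Pi.one_apply, mul_one]
  rw [← Pi.one_def, integral_indicator_one (measurableSet_Ioc.inter measurableSet_Ioc),
    Ioc_inter_Ioc, Real.volume_real_Ioc, min_add_add_right, tent, abs_sub_comm,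
    ← max_sub_min_eq_abs]
  ring_nf

lemma sum_mul_tent_nonneg {ι : Type*} [Fintype ι] (u : ℝ) (t a : ι → ℝ) :
    0 ≤ ∑ i, ∑ l, a i * a l * tent u (t i - t l) := by
  simp_rw [tent_sub_eq_integral_indicator_mul]
  refine sum_mul_integral_mul_nonneg volume _ (fun i l => ?_) a
  simp_rw [← inter_indicator_mul, Pi.one_apply, mul_one]
  exact (integrable_indicator_iff (measurableSet_Ioc.inter measurableSet_Ioc)).2
    ((integrableOn_const (C := (1 : ℝ)) measure_Ioc_lt_top.ne).mono_set inter_subset_left)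

lemma isPosDefFn_tent (u : ℝ) : IsPosDefFn (tent u) :=
  isPosDefFn_of_sum_mul_nonneg fun _ t a => sum_mul_tent_nonneg u t a

lemma tent_nonneg (u t : ℝ) : 0 ≤ tent u t := le_max_right _ _

lemma abs_tent_sub_tent_le (u s t : ℝ) : |tent u s - tent u t| ≤ |s - t| := by
  refine (abs_max_sub_max_le_abs _ _ _).trans ?_
  rw [sub_sub_sub_cancel_left, abs_sub_comm s t]
  exact abs_abs_sub_abs_le_abs_sub t s

def tentMixture (a c t : ℝ) : ℝ := ∫ u in a..c, tent u t / u ^ 2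

section tentMixture

variable {a c : ℝ}

lemma intervalIntegrable_tent_div_sq (t : ℝ) (ha : 0 < a) (hc : 0 < c) :
    IntervalIntegrable (fun u => tent u t / u ^ 2) volume a c := by
  refine ContinuousOn.intervalIntegrable fun u hu => ?_
  have hu : 0 < u := lt_of_lt_of_le (lt_min ha hc) hu.1
  unfold tent
  fun_prop (disch := positivity)

lemma tentMixture_nonneg (hac : a ≤ c) (t : ℝ) : 0 ≤ tentMixture a c t :=
  intervalIntegral.integral_nonneg hac fun u _ => div_nonneg (tent_nonneg u t) (sq_nonneg u)

lemma tentMixture_eq_zero {t : ℝ} (ha : a ≤ |t|) (hc : c ≤ |t|) : tentMixture a c t = 0 := by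
  rw [tentMixture, ← intervalIntegral.integral_zero]
  refine intervalIntegral.integral_congr fun u hu => ?_
  have hu : u ≤ |t| := hu.2.trans (max_le ha hc)
  simp [tent, max_eq_right (sub_nonpos.2 hu)]

lemma tentMixture_zero (ha : 0 < a) (hc : 0 < c) : tentMixture a c 0 = Real.log (c / a) := by
  rw [tentMixture, ← integral_inv_of_pos ha hc]
  refine intervalIntegral.integral_congr fun u hu => ?_
  have hu : 0 < u := lt_of_lt_of_le (lt_min ha hc) hu.1
  simp only [tent, abs_zero, sub_zero, max_eq_left hu.le]
  field_simp

lemma abs_tentMixture_sub_le (ha : 0 < a) (hac : a ≤ c) (s t : ℝ) :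
    |tentMixture a c s - tentMixture a c t| ≤ (c - a) / a ^ 2 * |s - t| := by
  have hc : 0 < c := ha.trans_le hac
  rw [tentMixture, tentMixture, ← intervalIntegral.integral_sub
    (intervalIntegrable_tent_div_sq s ha hc) (intervalIntegrable_tent_div_sq t ha hc)]
  have hbound : ∀ u ∈ uIoc a c, ‖tent u s / u ^ 2 - tent u t / u ^ 2‖ ≤ |s - t| / a ^ 2 := by
    intro u hu
    rw [uIoc_of_le hac] at hu
    rw [Real.norm_eq_abs, ← sub_div, abs_div, abs_of_pos (by nlinarith [hu.1] : 0 < u ^ 2)]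
    exact div_le_div₀ (abs_nonneg _) (abs_tent_sub_tent_le u s t) (by positivity)
      (pow_le_pow_left₀ ha.le hu.1.le 2)
  calc _ ≤ |s - t| / a ^ 2 * |c - a| := intervalIntegral.norm_integral_le_of_norm_le_const hbound
    _ = (c - a) / a ^ 2 * |s - t| := by rw [abs_of_nonneg (sub_nonneg.2 hac)]; ring

lemma continuous_tentMixture (ha : 0 < a) (hac : a ≤ c) : Continuous (tentMixture a c) :=
  (LipschitzWith.of_dist_le' fun s t => by
    simpa only [Real.dist_eq] using abs_tentMixture_sub_le ha hac s t).continuous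

lemma isPosDefFn_tentMixture (ha : 0 < a) (hac : a ≤ c) : IsPosDefFn (tentMixture a c) := by
  refine isPosDefFn_of_sum_mul_nonneg fun k t w => ?_
  have hc : 0 < c := ha.trans_le hac
  have hint : ∀ i l, IntervalIntegrable (fun u => w i * w l * (tent u (t i - t l) / u ^ 2))
      volume a c := fun i l => (intervalIntegrable_tent_div_sq _ ha hc).const_mul _
  calc 0 ≤ ∫ u in a..c, (∑ i, ∑ l, w i * w l * tent u (t i - t l)) / u ^ 2 :=
        intervalIntegral.integral_nonneg hac fun u _ =>
          div_nonneg (sum_mul_tent_nonneg u t w) (sq_nonneg u)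
    _ = ∑ i, ∑ l, w i * w l * tentMixture a c (t i - t l) := by
        simp_rw [Finset.sum_div, mul_div_assoc]
        rw [intervalIntegral.integral_finsetSum fun i _ =>
          by simpa only [Finset.sum_fn] using IntervalIntegrable.sum _ fun l _ => hint i l]
        refine Finset.sum_congr rfl fun i _ => ?_
        rw [intervalIntegral.integral_finsetSum fun l _ => hint i l]
        exact Finset.sum_congr rfl fun l _ => intervalIntegral.integral_const_mul _ _

lemma sum_range_tentMixture {r : ℕ → ℝ} (hr : ∀ j, 0 < r j) (n : ℕ) (t : ℝ) :
    ∑ j ∈ Finset.range n, tentMixture (r (j + 1)) (r j) t = tentMixture (r n) (r 0) t := by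
  rw [tentMixture, intervalIntegral.integral_symm (r 0),
    ← intervalIntegral.sum_integral_adjacent_intervals fun j _ =>
      intervalIntegrable_tent_div_sq t (hr j) (hr (j + 1)), ← Finset.sum_neg_distrib]
  exact Finset.sum_congr rfl fun j _ => intervalIntegral.integral_symm _ _

lemma tentMixture_abs_left {t : ℝ} (ht : t ≠ 0) (hc : |t| ≤ c) :
    tentMixture |t| c t = Real.log c - Real.log |t| + |t| / c - 1 := by
  have hs : 0 < |t| := abs_pos.2 ht
  have hderiv : ∀ u ∈ uIcc |t| c,
      HasDerivAt (fun v => Real.log v + |t| * v⁻¹) (tent u t / u ^ 2) u := by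
    intro u hu
    rw [uIcc_of_le hc] at hu
    have hu0 : 0 < u := hs.trans_le hu.1
    refine ((Real.hasDerivAt_log hu0.ne').add
      ((hasDerivAt_inv hu0.ne').const_mul |t|)).congr_deriv ?_
    rw [tent, max_eq_left (sub_nonneg.2 hu.1)]
    field_simp
    ring
  rw [tentMixture, intervalIntegral.integral_eq_sub_of_hasDerivAt hderiv
    (intervalIntegrable_tent_div_sq t hs (hs.trans_le hc)), mul_inv_cancel₀ hs.ne']
  ring

lemma tent_one_add_tentMixture (ha : 0 < a) {t : ℝ} (hat : a ≤ |t|) :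
    tent 1 t + tentMixture a 1 t = max (Real.log (1 / |t|)) 0 := by
  have ht : t ≠ 0 := abs_pos.1 (ha.trans_le hat)
  rw [one_div, Real.log_inv]
  rcases le_or_gt |t| 1 with h1 | h1
  · have hsplit := intervalIntegral.integral_add_adjacent_intervals
      (intervalIntegrable_tent_div_sq t ha (ha.trans_le hat))
      (intervalIntegrable_tent_div_sq t (ha.trans_le hat) one_pos)
    rw [tentMixture, ← hsplit, ← tentMixture, ← tentMixture, tentMixture_eq_zero hat le_rfl,
      tentMixture_abs_left ht h1, tent, max_eq_left (sub_nonneg.2 h1),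
      max_eq_left (neg_nonneg.2 (Real.log_nonpos (abs_nonneg t) h1)), Real.log_one]
    ring
  · rw [tentMixture_eq_zero hat h1.le, tent, max_eq_right (by linarith),
      max_eq_right (neg_nonpos.2 (Real.log_nonneg h1.le)), add_zero]

end tentMixture

/-- The paper's `K_j(t) = ∫_{(b^{-(j+1)}, b^{-j}]} (u - |t|)₊ ν(du)` for `ν(du) = du/u² + δ₁(du)`:
the atom at `1` only meets the block `j = 0`. -/
def logKernelBlock (b : ℝ) (j : ℕ) (t : ℝ) : ℝ :=
  (if j = 0 then tent 1 t else 0) + tentMixture (b ^ (j + 1))⁻¹ (b ^ j)⁻¹ t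

section logKernelBlock

variable {b : ℝ}

lemma inv_pow_succ_pos_le (hb : 1 ≤ b) (j : ℕ) :
    0 < (b ^ (j + 1))⁻¹ ∧ (b ^ (j + 1))⁻¹ ≤ (b ^ j)⁻¹ :=
  ⟨by positivity, inv_pow_le_inv_pow_of_le hb j.le_succ⟩

lemma continuous_logKernelBlock (hb : 1 ≤ b) (j : ℕ) : Continuous (logKernelBlock b j) :=
  (Continuous.if_const _ (by unfold tent; fun_prop) continuous_const).add
    (continuous_tentMixture (inv_pow_succ_pos_le hb j).1 (inv_pow_succ_pos_le hb j).2)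

lemma logKernelBlock_nonneg (hb : 1 ≤ b) (j : ℕ) (t : ℝ) : 0 ≤ logKernelBlock b j t := by
  refine add_nonneg ?_ (tentMixture_nonneg (inv_pow_succ_pos_le hb j).2 t)
  split_ifs
  exacts [tent_nonneg 1 t, le_rfl]

lemma isPosDefFn_logKernelBlock (hb : 1 ≤ b) (j : ℕ) : IsPosDefFn (logKernelBlock b j) := by
  refine isPosDefFn_add ?_
    (isPosDefFn_tentMixture (inv_pow_succ_pos_le hb j).1 (inv_pow_succ_pos_le hb j).2)
  split_ifs
  · exact isPosDefFn_tent 1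
  · intro k t c
    simp

lemma logKernelBlock_eq_zero (hb : 1 ≤ b) {j : ℕ} {t : ℝ} (ht : (b ^ j)⁻¹ ≤ |t|) :
    logKernelBlock b j t = 0 := by
  rw [logKernelBlock, tentMixture_eq_zero ((inv_pow_succ_pos_le hb j).2.trans ht) ht, add_zero]
  split_ifs with hj
  · subst hj
    rw [pow_zero, inv_one] at ht
    exact max_eq_right (sub_nonpos.2 ht)
  · rfl

lemma logKernelBlock_zero (hb : 0 < b) {j : ℕ} (hj : j ≠ 0) :
    logKernelBlock b j 0 = Real.log b := by
  rw [logKernelBlock, if_neg hj, zero_add, tentMixture_zero (by positivity) (by positivity),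
    pow_succ]
  field_simp

lemma abs_logKernelBlock_sub_le (hb : 1 ≤ b) (j : ℕ) (t : ℝ) :
    |logKernelBlock b j t - logKernelBlock b j 0| ≤ (b ^ 2 + 1) * b ^ j * |t| := by
  obtain ⟨ha, hac⟩ := inv_pow_succ_pos_le hb j
  have hbj : 1 ≤ b ^ j := one_le_pow₀ hb
  have hatom :
      |(if j = 0 then tent 1 t else 0) - (if j = 0 then tent 1 0 else 0)| ≤ b ^ j * |t| := by
    split_ifs
    · simpa using (abs_tent_sub_tent_le 1 t 0).trans (le_mul_of_one_le_left (abs_nonneg _) hbj)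
    · simp only [sub_zero, abs_zero]
      positivity
  have hweight : ((b ^ j)⁻¹ - (b ^ (j + 1))⁻¹) / ((b ^ (j + 1))⁻¹) ^ 2 ≤ b ^ 2 * b ^ j := by
    calc _ ≤ (b ^ j)⁻¹ / ((b ^ (j + 1))⁻¹) ^ 2 := by gcongr; exact sub_le_self _ ha.le
      _ = b ^ 2 * b ^ j := by field_simp; ring
  have hmix := (abs_tentMixture_sub_le ha hac t 0).trans
    (mul_le_mul_of_nonneg_right hweight (abs_nonneg (t - 0)))
  rw [sub_zero] at hmix
  calc _ = |((if j = 0 then tent 1 t else 0) - (if j = 0 then tent 1 0 else 0))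
        + (tentMixture (b ^ (j + 1))⁻¹ (b ^ j)⁻¹ t - tentMixture (b ^ (j + 1))⁻¹ (b ^ j)⁻¹ 0)| := by
          rw [logKernelBlock, logKernelBlock]; ring_nf
    _ ≤ b ^ j * |t| + b ^ 2 * b ^ j * |t| := (abs_add_le _ _).trans (add_le_add hatom hmix)
    _ = (b ^ 2 + 1) * b ^ j * |t| := by ring

lemma tsum_logKernelBlock (hb : 1 < b) {t : ℝ} (ht : t ≠ 0) :
    ∑' j, logKernelBlock b j t = max (Real.log (1 / |t|)) 0 := by
  obtain ⟨M, hM⟩ := exists_pow_lt_of_lt_one (abs_pos.2 ht) (inv_lt_one_of_one_lt₀ hb)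
  rw [inv_pow] at hM
  have hsmall : ∀ j, M ≤ j → (b ^ j)⁻¹ ≤ |t| := fun j hj =>
    (inv_pow_le_inv_pow_of_le hb.le hj).trans hM.le
  rw [tsum_eq_sum (s := Finset.range (M + 1)) fun j hj => logKernelBlock_eq_zero hb.le
    (hsmall j (by simp at hj; omega))]
  simp only [logKernelBlock]
  rw [Finset.sum_add_distrib, Finset.sum_ite_eq' (Finset.range (M + 1)) 0 (fun _ => tent 1 t),
    if_pos (by simp), sum_range_tentMixture (r := fun j => (b ^ j)⁻¹) (fun j => by positivity),
    pow_zero, inv_one]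
  exact tent_one_add_tentMixture (by positivity) (hsmall _ M.le_succ)

end logKernelBlock

/-- The exact log-kernel on `ℝ` is sharply-`σ^b(1/2)`-regular.
For every integer `b ≥ 2` there is a sequence `(K_j)` of continuous nonnegative positive
definite functions on `ℝ` with `K_j(t) = 0` for `|t| > b^{−j}`, `K_j(0) = log b` for `j ≥ 1`,
uniform rescaled Hölder-`1/2` regularity at the origin, and
`∑_j K_j(t) = log₊(1/|t|)` for every `t ≠ 0`. -/
theorem exact_log_kernel_sharply_sigma_regular (b : ℕ) (hb : 2 ≤ b) :
    ∃ K : ℕ → ℝ → ℝ,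
      (∀ j, Continuous (K j)) ∧
      (∀ j t, 0 ≤ K j t) ∧
      (∀ j, IsPosDefFn (K j)) ∧
      (∀ (j : ℕ) (t : ℝ), (b : ℝ) ^ (-(j : ℝ)) < |t| → K j t = 0) ∧
      (∀ j : ℕ, 1 ≤ j → K j 0 = Real.log b) ∧
      (∃ C : ℝ, ∀ (j : ℕ) (t : ℝ), t ≠ 0 → |t| ≤ (b : ℝ) ^ (-(j : ℝ)) →
        |K j t - K j 0| ≤ C * (b : ℝ) ^ (j : ℝ) * |t|) ∧
      (∀ t : ℝ, t ≠ 0 → ∑' j, K j t = max (Real.log (1 / |t|)) 0) := by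
  have hb1 : (1 : ℝ) < b := by exact_mod_cast hb
  have hrpow_neg (j : ℕ) : (b : ℝ) ^ (-(j : ℝ)) = ((b : ℝ) ^ j)⁻¹ := by
    rw [Real.rpow_neg (by positivity), Real.rpow_natCast]
  refine ⟨logKernelBlock b, continuous_logKernelBlock hb1.le, logKernelBlock_nonneg hb1.le,
    isPosDefFn_logKernelBlock hb1.le,
    fun j t ht => logKernelBlock_eq_zero hb1.le (hrpow_neg j ▸ ht.le),
    fun j hj => logKernelBlock_zero (by positivity) (by omega),
    ⟨(b : ℝ) ^ 2 + 1, fun j t _ _ => ?_⟩, fun t ht => tsum_logKernelBlock hb1 ht⟩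
  rw [Real.rpow_natCast]
  exact abs_logKernelBlock_sub_le hb1.le j t

end
end

section
/- Quadratic Hölder estimate for exponentiated kernels (key estimate of Lemma 3.11). Let d ≥ 1 be an integer, γ ∈ ℝ, and let R : [0,1]^d × [0,1]^d → ℝ be a bounded function such that sup_{t≠s} |R(t,t) − R(s,s)| / |t−s| < ∞ and sup_{t≠s} |R(t,t) + R(s,s) − 2R(t,s)| / |t−s|² < ∞ (suprema over t, s ∈ [0,1]^d with t ≠ s). Then sup_{t≠s} |exp(γ²R(t,t)) + exp(γ²R(s,s)) − 2·exp(γ²R(t,s))| / |t−s|² < ∞. (For a centered Gaussian process Z with covariance kernel R, the numerator equals 𝔼[|P(t) − P(s)|²] for P(t) = exp(γZ(t) − (γ²/2)R(t,t)).) -/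
/-!
Write `a, b, c` for `γ²R(t,t), γ²R(s,s), γ²R(t,s)`, all bounded above by `M = γ² sup |R|`, so that
`exp` is `exp M`-Lipschitz on the relevant range. Split the numerator at the midpoint exponent:
`eᵃ + eᵇ - 2e^((a+b)/2) = (e^(a/2) - e^(b/2))²` is quadratic in the Lipschitz increment `a - b`
of the diagonal, while `2(e^((a+b)/2) - eᶜ)` is at most `e^M |a + b - 2c|`, which is the
second-order increment of the kernel.
-/

noncomputable section

open Real

def closedUnitCube (d : ℕ) : Set (EuclideanSpace ℝ (Fin d)) :=
  {t | ∀ β, t β ∈ Set.Icc (0 : ℝ) 1}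

lemma abs_exp_sub_exp_le_of_le {x y M : ℝ} (hx : x ≤ M) (hy : y ≤ M) :
    |exp x - exp y| ≤ exp M * |x - y| := by
  simpa [Real.norm_eq_abs] using (convex_Iic M).norm_image_sub_le_of_norm_deriv_le
    (fun z _ => differentiableAt_exp) (fun z hz => by simpa using hz) hy hx

lemma exp_add_exp_sub_two_mul_exp_mid (a b : ℝ) :
    exp a + exp b - 2 * exp ((a + b) / 2) = (exp (a / 2) - exp (b / 2)) ^ 2 := by
  have hsq (x : ℝ) : exp x = exp (x / 2) ^ 2 := by rw [sq, ← exp_add, add_halves]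
  rw [hsq a, hsq b, add_div, exp_add]
  ring

lemma abs_exp_add_exp_sub_two_mul_exp_le {a b c M : ℝ} (ha : a ≤ M) (hb : b ≤ M) (hc : c ≤ M) :
    |exp a + exp b - 2 * exp c| ≤ exp M * ((a - b) ^ 2 / 4 + |a + b - 2 * c|) := by
  have hhalf : |exp (a / 2) - exp (b / 2)| ≤ exp (M / 2) * (|a - b| / 2) := by
    have := abs_exp_sub_exp_le_of_le (x := a / 2) (y := b / 2) (M := M / 2) (by linarith)
      (by linarith)
    rwa [← sub_div, abs_div, abs_two] at this
  have hmid : |exp ((a + b) / 2) - exp c| ≤ exp M * (|a + b - 2 * c| / 2) := by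
    have := abs_exp_sub_exp_le_of_le (x := (a + b) / 2) (hy := hc) (by linarith)
    rwa [show (a + b) / 2 - c = (a + b - 2 * c) / 2 by ring, abs_div, abs_two] at this
  have hsq : (exp (a / 2) - exp (b / 2)) ^ 2 ≤ exp M * ((a - b) ^ 2 / 4) := by
    calc (exp (a / 2) - exp (b / 2)) ^ 2 = |exp (a / 2) - exp (b / 2)| ^ 2 := (sq_abs _).symm
      _ ≤ (exp (M / 2) * (|a - b| / 2)) ^ 2 := pow_le_pow_left₀ (abs_nonneg _) hhalf 2
      _ = exp M * ((a - b) ^ 2 / 4) := by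
        rw [mul_pow, ← exp_nat_mul, div_pow, sq_abs]; push_cast; ring_nf
  calc |exp a + exp b - 2 * exp c|
      = |(exp (a / 2) - exp (b / 2)) ^ 2 + 2 * (exp ((a + b) / 2) - exp c)| := by
        rw [← exp_add_exp_sub_two_mul_exp_mid]; ring_nf
    _ ≤ (exp (a / 2) - exp (b / 2)) ^ 2 + 2 * |exp ((a + b) / 2) - exp c| := by
        refine (abs_add_le _ _).trans ?_
        rw [abs_of_nonneg (sq_nonneg _), abs_mul, abs_two]
    _ ≤ exp M * ((a - b) ^ 2 / 4 + |a + b - 2 * c|) := by linarith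

theorem exp_kernel_quadratic_holder_general
    (d : ℕ) (γ : ℝ)
    (R : EuclideanSpace ℝ (Fin d) → EuclideanSpace ℝ (Fin d) → ℝ)
    (hbdd : ∃ B : ℝ, ∀ t ∈ closedUnitCube d, ∀ s ∈ closedUnitCube d, |R t s| ≤ B)
    (h1 : ∃ C1 : ℝ, ∀ t ∈ closedUnitCube d, ∀ s ∈ closedUnitCube d, t ≠ s →
      |R t t - R s s| ≤ C1 * ‖t - s‖)
    (h2 : ∃ C2 : ℝ, ∀ t ∈ closedUnitCube d, ∀ s ∈ closedUnitCube d, t ≠ s →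
      |R t t + R s s - 2 * R t s| ≤ C2 * ‖t - s‖ ^ 2) :
    ∃ C : ℝ, ∀ t ∈ closedUnitCube d, ∀ s ∈ closedUnitCube d, t ≠ s →
      |Real.exp (γ ^ 2 * R t t) + Real.exp (γ ^ 2 * R s s) -
          2 * Real.exp (γ ^ 2 * R t s)| ≤ C * ‖t - s‖ ^ 2 := by
  obtain ⟨B, hB⟩ := hbdd
  obtain ⟨C1, hC1⟩ := h1
  obtain ⟨C2, hC2⟩ := h2
  refine ⟨exp (γ ^ 2 * B) * (γ ^ 4 * C1 ^ 2 / 4 + γ ^ 2 * C2), fun t ht s hs hts => ?_⟩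
  have hle {x y} (hx : x ∈ closedUnitCube d) (hy : y ∈ closedUnitCube d) :
      γ ^ 2 * R x y ≤ γ ^ 2 * B :=
    mul_le_mul_of_nonneg_left ((le_abs_self _).trans (hB x hx y hy)) (sq_nonneg γ)
  have hdiag : (γ ^ 2 * R t t - γ ^ 2 * R s s) ^ 2 ≤ (γ ^ 2) ^ 2 * (C1 * ‖t - s‖) ^ 2 := by
    rw [← mul_sub, mul_pow, ← sq_abs (R t t - R s s)]
    exact mul_le_mul_of_nonneg_left (pow_le_pow_left₀ (abs_nonneg _) (hC1 t ht s hs hts) 2)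
      (sq_nonneg _)
  have hoff : |γ ^ 2 * R t t + γ ^ 2 * R s s - 2 * (γ ^ 2 * R t s)| ≤
      γ ^ 2 * (C2 * ‖t - s‖ ^ 2) := by
    rw [show γ ^ 2 * R t t + γ ^ 2 * R s s - 2 * (γ ^ 2 * R t s) =
      γ ^ 2 * (R t t + R s s - 2 * R t s) by ring, abs_mul, abs_sq]
    exact mul_le_mul_of_nonneg_left (hC2 t ht s hs hts) (sq_nonneg γ)
  calc _ ≤ exp (γ ^ 2 * B) * ((γ ^ 2 * R t t - γ ^ 2 * R s s) ^ 2 / 4 +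
          |γ ^ 2 * R t t + γ ^ 2 * R s s - 2 * (γ ^ 2 * R t s)|) :=
        abs_exp_add_exp_sub_two_mul_exp_le (hle ht ht) (hle hs hs) (hle ht hs)
    _ ≤ exp (γ ^ 2 * B) * ((γ ^ 2) ^ 2 * (C1 * ‖t - s‖) ^ 2 / 4 +
          γ ^ 2 * (C2 * ‖t - s‖ ^ 2)) := by
        gcongr
    _ = _ := by ring

/-- Quadratic Hölder estimate for exponentiated kernels.
If `R : [0,1]^d × [0,1]^d → ℝ` is bounded, the diagonal `t ↦ R(t,t)` is Lipschitz, and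
`|R(t,t) + R(s,s) − 2R(t,s)| = O(|t−s|²)`, then
`|exp(γ²R(t,t)) + exp(γ²R(s,s)) − 2 exp(γ²R(t,s))| = O(|t−s|²)` uniformly on `[0,1]^d`. -/
theorem exp_kernel_quadratic_holder
    (d : ℕ) (hd : 1 ≤ d) (γ : ℝ)
    (R : EuclideanSpace ℝ (Fin d) → EuclideanSpace ℝ (Fin d) → ℝ)
    (hbdd : ∃ B : ℝ, ∀ t ∈ closedUnitCube d, ∀ s ∈ closedUnitCube d, |R t s| ≤ B)
    (h1 : ∃ C1 : ℝ, ∀ t ∈ closedUnitCube d, ∀ s ∈ closedUnitCube d, t ≠ s →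
      |R t t - R s s| ≤ C1 * ‖t - s‖)
    (h2 : ∃ C2 : ℝ, ∀ t ∈ closedUnitCube d, ∀ s ∈ closedUnitCube d, t ≠ s →
      |R t t + R s s - 2 * R t s| ≤ C2 * ‖t - s‖ ^ 2) :
    ∃ C : ℝ, ∀ t ∈ closedUnitCube d, ∀ s ∈ closedUnitCube d, t ≠ s →
      |Real.exp (γ ^ 2 * R t t) + Real.exp (γ ^ 2 * R s s) -
          2 * Real.exp (γ ^ 2 * R t s)| ≤ C * ‖t - s‖ ^ 2 :=
  exp_kernel_quadratic_holder_general d γ R hbdd h1 h2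

end
end

section
/- Computation of χ(b, Λ_α) for the canonical Mandelbrot covering intensity. Let α ∈ (0,1) and let b ≥ 2 be an integer. Let Λ_α := ∑_{n=1}^∞ δ_{α/n} be the sum of Dirac masses at the points α/n. Then limsup_{j→∞} ∫_{[b^{−j}, b^{−(j−1)})} y Λ_α(dy) = α·log b; explicitly, ∫_{[b^{−j}, b^{−(j−1)})} y Λ_α(dy) = ∑_{n∈ℕ: α b^{j−1} < n ≤ α b^j} α/n, and limsup_{j→∞} of this quantity equals α·log b. -/
/-!
`Λ_α` puts the mass `α / n` at the point `α / n`, which lies in `[b^{-j}, b^{-j+1})` exactly when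
`α b^{j-1} < n ≤ α b^j`. The integral is therefore `α (H ⌊α b^j⌋ - H ⌊α b^{j-1}⌋)` with `H` the
harmonic numbers, and `H ⌊x⌋ - log x → γ` makes it converge to `α log b`; in particular the
limsup is a limit.
-/

open MeasureTheory Filter

noncomputable section

/-- The canonical Mandelbrot covering intensity `Λ_α = ∑_{n=1}^∞ δ_{α/n}`
(indexed here by `n+1` with `n : ℕ`). -/
def LambdaAlpha (α : ℝ) : Measure ℝ :=
  Measure.sum fun n : ℕ => Measure.dirac (α / (n + 1))

open Topology ENNReal

lemma setLIntegral_LambdaAlpha (α : ℝ) (f : ℝ → ℝ≥0∞) {s : Set ℝ} (hs : MeasurableSet s) :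
    ∫⁻ y in s, f y ∂LambdaAlpha α = ∑' n : ℕ, s.indicator f (α / (n + 1)) := by
  classical
  simp only [LambdaAlpha, Measure.restrict_sum _ hs, lintegral_sum_measure, setLIntegral_dirac,
    Set.indicator_apply]

lemma div_mem_Ico_inv_iff {α t u v : ℝ} (ht : 0 < t) (hu : 0 < u) (hv : 0 < v) :
    α / t ∈ Set.Ico u⁻¹ v⁻¹ ↔ α * v < t ∧ t ≤ α * u := by
  rw [Set.mem_Ico, le_div_iff₀ ht, inv_mul_le_iff₀ hu, div_lt_iff₀ ht, lt_inv_mul_iff₀ hv,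
    mul_comm u, mul_comm v, and_comm]

lemma setLIntegral_LambdaAlpha_Ico_inv {α u v : ℝ} (hα : 0 ≤ α) (hu : 0 < u) (hv : 0 < v)
    (f : ℝ → ℝ≥0∞) :
    ∫⁻ y in Set.Ico u⁻¹ v⁻¹, f y ∂LambdaAlpha α =
      ∑' n : {n : ℕ // α * v < n ∧ (n : ℝ) ≤ α * u}, f (α / n) := by
  set S : Set ℕ := {n | α * v < n ∧ (n : ℝ) ≤ α * u}
  set g : ℕ → ℝ≥0∞ := fun n => f (α / n)
  have h0 : 0 ∉ S := fun h => (mul_nonneg hα hv.le).not_gt (by simpa using h.1)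
  have hmem (n : ℕ) : α / (n + 1 : ℝ) ∈ Set.Ico u⁻¹ v⁻¹ ↔ n + 1 ∈ S := by
    rw [div_mem_Ico_inv_iff (by positivity) hu hv]
    simp [S]
  calc ∫⁻ y in Set.Ico u⁻¹ v⁻¹, f y ∂LambdaAlpha α
      = ∑' n : ℕ, S.indicator g (n + 1) := by
        rw [setLIntegral_LambdaAlpha α f measurableSet_Ico]
        refine tsum_congr fun n => ?_
        simp only [Set.indicator_apply, hmem, g, Nat.cast_succ]
    _ = ∑' n : ℕ, S.indicator g n := by
        rw [tsum_eq_zero_add' ENNReal.summable (f := S.indicator g), Set.indicator_of_notMem h0,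
          zero_add]
    _ = _ := (tsum_subtype S g).symm

lemma setLIntegral_LambdaAlpha_Ico_zpow {α b : ℝ} (hα : 0 ≤ α) (hb : 0 < b) (j : ℤ)
    (f : ℝ → ℝ≥0∞) :
    ∫⁻ y in Set.Ico (b ^ (-j)) (b ^ (-j + 1)), f y ∂LambdaAlpha α =
      ∑' n : {n : ℕ // α * b ^ (j - 1) < n ∧ (n : ℝ) ≤ α * b ^ j}, f (α / n) := by
  rw [zpow_neg, show -j + 1 = -(j - 1) by ring, zpow_neg]
  exact setLIntegral_LambdaAlpha_Ico_inv hα (zpow_pos hb j) (zpow_pos hb (j - 1)) f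

lemma sum_Ioc_inv_eq_harmonic_sub {m n : ℕ} (hmn : m ≤ n) :
    ∑ i ∈ Finset.Ioc m n, (i : ℝ)⁻¹ = harmonic n - harmonic m := by
  have hharmonic (k : ℕ) : (harmonic k : ℝ) = ∑ i ∈ Finset.Ioc 0 k, (i : ℝ)⁻¹ := by
    rw [harmonic_eq_sum_Icc]
    push_cast
    rfl
  rw [hharmonic, hharmonic, ← Finset.sum_Ioc_consecutive _ m.zero_le hmn, add_sub_cancel_left]

lemma natCast_mem_Ioc_iff_mem_Ioc_floor {x y : ℝ} (hx : 0 ≤ x) (hy : 0 ≤ y) (n : ℕ) :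
    x < n ∧ (n : ℝ) ≤ y ↔ n ∈ Finset.Ioc ⌊x⌋₊ ⌊y⌋₊ := by
  rw [Finset.mem_Ioc, Nat.floor_lt hx, Nat.le_floor_iff hy]

lemma tsum_ofReal_div_eq_harmonic_sub {α x y : ℝ} (hα : 0 ≤ α) (hx : 0 ≤ x) (hxy : x ≤ y) :
    ∑' n : {n : ℕ // x < n ∧ (n : ℝ) ≤ y}, ENNReal.ofReal (α / n) =
      ENNReal.ofReal (α * (harmonic ⌊y⌋₊ - harmonic ⌊x⌋₊)) := by
  refine ((Equiv.subtypeEquivRight (natCast_mem_Ioc_iff_mem_Ioc_floor hx (hx.trans hxy))).tsum_eq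
    (fun n : Finset.Ioc ⌊x⌋₊ ⌊y⌋₊ => ENNReal.ofReal (α / n))).trans ?_
  rw [Finset.tsum_subtype (f := fun n : ℕ => ENNReal.ofReal (α / n)),
    ← ENNReal.ofReal_sum_of_nonneg fun n _ => by positivity,
    ← sum_Ioc_inv_eq_harmonic_sub (Nat.floor_mono hxy), Finset.mul_sum]
  simp only [div_eq_mul_inv]

lemma setLIntegral_LambdaAlpha_Ico_zpow_eq_harmonic_sub {α b : ℝ} (hα : 0 ≤ α) (hb : 1 ≤ b)
    (j : ℕ) :
    ∫⁻ y in Set.Ico (b ^ (-(j : ℤ))) (b ^ (-(j : ℤ) + 1)), ENNReal.ofReal y ∂LambdaAlpha α =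
      ENNReal.ofReal (α * (harmonic ⌊α * b ^ j⌋₊ - harmonic ⌊α * b ^ j / b⌋₊)) := by
  have hb0 : 0 < b := one_pos.trans_le hb
  rw [setLIntegral_LambdaAlpha_Ico_zpow hα hb0, zpow_sub_one₀ hb0.ne', zpow_natCast, ← mul_assoc,
    ← div_eq_mul_inv]
  exact tsum_ofReal_div_eq_harmonic_sub hα (by positivity) (div_le_self (by positivity) hb)

lemma tendsto_harmonic_floor_sub_log :
    Tendsto (fun x : ℝ => (harmonic ⌊x⌋₊ : ℝ) - Real.log x) atTop
      (𝓝 Real.eulerMascheroniConstant) := by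
  have hfloor := Real.tendsto_harmonic_sub_log.comp (tendsto_nat_floor_atTop (α := ℝ))
  have hratio : Tendsto (fun x : ℝ => Real.log (⌊x⌋₊ / x)) atTop (𝓝 0) := by
    simpa [Function.comp_def] using
      (Real.continuousAt_log one_ne_zero).tendsto.comp tendsto_nat_floor_div_atTop
  have hsum := hfloor.add hratio
  rw [add_zero] at hsum
  refine hsum.congr' ?_
  filter_upwards [eventually_ge_atTop 1] with x hx
  have hfloor_pos : (0 : ℝ) < ⌊x⌋₊ := Nat.cast_pos.mpr (Nat.floor_pos.mpr hx)
  simp only [Function.comp_apply, Real.log_div hfloor_pos.ne' (by positivity)]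
  ring

lemma tendsto_harmonic_floor_sub_harmonic_floor_div {c : ℝ} (hc : 0 < c) :
    Tendsto (fun x : ℝ => (harmonic ⌊x⌋₊ : ℝ) - harmonic ⌊x / c⌋₊) atTop (𝓝 (Real.log c)) := by
  have h := (tendsto_harmonic_floor_sub_log.sub
    (tendsto_harmonic_floor_sub_log.comp (tendsto_id.atTop_div_const hc))).add_const (Real.log c)
  rw [sub_self, zero_add] at h
  refine h.congr' ?_
  filter_upwards [eventually_gt_atTop 0] with x hx
  simp only [Function.comp_apply, id, Real.log_div hx.ne' hc.ne']
  ring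

theorem chi_canonical_covering_general
    (α : ℝ) (hα0 : 0 < α) (b : ℕ) (hb : 2 ≤ b) :
    (∀ j : ℕ,
      (∫⁻ y in Set.Ico ((b : ℝ) ^ (-(j : ℤ))) ((b : ℝ) ^ (-(j : ℤ) + 1)),
          ENNReal.ofReal y ∂(LambdaAlpha α)) =
        ∑' n : {n : ℕ // α * (b : ℝ) ^ ((j : ℤ) - 1) < (n : ℝ) ∧
            (n : ℝ) ≤ α * (b : ℝ) ^ (j : ℤ)},
          ENNReal.ofReal (α / ((n : ℕ) : ℝ))) ∧
    limsup (fun j : ℕ =>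
        ∫⁻ y in Set.Ico ((b : ℝ) ^ (-(j : ℤ))) ((b : ℝ) ^ (-(j : ℤ) + 1)),
          ENNReal.ofReal y ∂(LambdaAlpha α)) atTop =
      ENNReal.ofReal (α * Real.log b) := by
  have hb1 : (1 : ℝ) < b := by exact_mod_cast hb
  refine ⟨fun j => setLIntegral_LambdaAlpha_Ico_zpow hα0.le (one_pos.trans hb1) j _, ?_⟩
  simp_rw [setLIntegral_LambdaAlpha_Ico_zpow_eq_harmonic_sub hα0.le hb1.le]
  have hscale : Tendsto (fun j : ℕ => α * (b : ℝ) ^ j) atTop atTop :=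
    (tendsto_pow_atTop_atTop_of_one_lt hb1).const_mul_atTop hα0
  have hlim := (tendsto_harmonic_floor_sub_harmonic_floor_div (one_pos.trans hb1)).comp hscale
  exact ((ENNReal.continuous_ofReal.tendsto _).comp (hlim.const_mul α)).limsup_eq

/-- Computation of `χ(b, Λ_α)` for the canonical Mandelbrot covering
intensity. For `α ∈ (0,1)` and an integer `b ≥ 2`:
`∫_{[b^{−j}, b^{−(j−1)})} y Λ_α(dy) = ∑_{n : αb^{j−1} < n ≤ αb^j} α/n` for every `j`, and
the limsup over `j → ∞` of these integrals equals `α·log b`. -/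
theorem chi_canonical_covering
    (α : ℝ) (hα0 : 0 < α) (hα1 : α < 1) (b : ℕ) (hb : 2 ≤ b) :
    (∀ j : ℕ,
      (∫⁻ y in Set.Ico ((b : ℝ) ^ (-(j : ℤ))) ((b : ℝ) ^ (-(j : ℤ) + 1)),
          ENNReal.ofReal y ∂(LambdaAlpha α)) =
        ∑' n : {n : ℕ // α * (b : ℝ) ^ ((j : ℤ) - 1) < (n : ℝ) ∧
            (n : ℝ) ≤ α * (b : ℝ) ^ (j : ℤ)},
          ENNReal.ofReal (α / ((n : ℕ) : ℝ))) ∧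
    limsup (fun j : ℕ =>
        ∫⁻ y in Set.Ico ((b : ℝ) ^ (-(j : ℤ))) ((b : ℝ) ^ (-(j : ℤ) + 1)),
          ENNReal.ofReal y ∂(LambdaAlpha α)) atTop =
      ENNReal.ofReal (α * Real.log b) :=
  chi_canonical_covering_general α hα0 b hb

end
end
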